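/- Scaling the rank 3 rational quadratic form with Gram matrix [[-1,-1,1/2],[-1,-2,1/2],[1/2,1/2,-1]] by 2 yields the integral Gram matrix [[-2,-2,1],[-2,-4,1],[1,1,-2]], which is isometric over Z to A2(-1) ⊕ A1(-1); consequently U ⊕ U ⊕ [[-2,-2,1],[-2,-4,1],[1,1,-2]] is isometric to U ⊕ U ⊕ A2(-1) ⊕ A1(-1). -/

import Mathlib

/-!
Congruence of Gram matrices is compatible with orthogonal sums with a common lattice, so the
isometry `U ⊕ U ⊕ G ≅ U ⊕ U ⊕ A₂(-1) ⊕ A₁(-1)` follows from `G ≅ A₂(-1) ⊕ A₁(-1)`, for which an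
explicit change of basis suffices.
-/

open Matrix

def gramHalf : Matrix (Fin 3) (Fin 3) ℚ := !![-1, -1, 1/2; -1, -2, 1/2; 1/2, 1/2, -1]

def gramG : Matrix (Fin 3) (Fin 3) ℤ := !![-2, -2, 1; -2, -4, 1; 1, 1, -2]

/-- Gram matrix of `U ⊕ U ⊕ [[-2,-2,1],[-2,-4,1],[1,1,-2]]`. -/
def gramUUG : Matrix (Fin 7) (Fin 7) ℤ :=
  !![ 0, 1, 0, 0,  0,  0,  0;
      1, 0, 0, 0,  0,  0,  0;
      0, 0, 0, 1,  0,  0,  0;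
      0, 0, 1, 0,  0,  0,  0;
      0, 0, 0, 0, -2, -2,  1;
      0, 0, 0, 0, -2, -4,  1;
      0, 0, 0, 0,  1,  1, -2]

/-- Gram matrix of `U ⊕ U ⊕ A2(-1) ⊕ A1(-1)`. -/
def gramUUA2A1 : Matrix (Fin 7) (Fin 7) ℤ :=
  !![ 0, 1, 0, 0,  0,  0,  0;
      1, 0, 0, 0,  0,  0,  0;
      0, 0, 0, 1,  0,  0,  0;
      0, 0, 1, 0,  0,  0,  0;
      0, 0, 0, 0, -2,  1,  0;
      0, 0, 0, 0,  1, -2,  0;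
      0, 0, 0, 0,  0,  0, -2]

namespace Matrix

variable {m n R : Type*} [Fintype m] [DecidableEq m] [Fintype n] [DecidableEq n] [CommRing R]

/-- `A` and `B` are Gram matrices of the same lattice in two bases. -/
def IsCongruent (A B : Matrix n n R) : Prop :=
  ∃ P : Matrix n n R, IsUnit P.det ∧ Pᵀ * A * P = B

theorem IsCongruent.fromBlocks_right (A : Matrix m m R) {B B' : Matrix n n R}
    (h : IsCongruent B B') : IsCongruent (fromBlocks A 0 0 B) (fromBlocks A 0 0 B') := by
  obtain ⟨P, hP, rfl⟩ := h
  refine ⟨fromBlocks 1 0 0 P, ?_, ?_⟩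
  · simpa [det_fromBlocks_zero₂₁] using hP
  · simp [fromBlocks_transpose, fromBlocks_multiply]

theorem IsCongruent.reindex (e : m ≃ n) {A B : Matrix m m R} (h : IsCongruent A B) :
    IsCongruent (Matrix.reindex e e A) (Matrix.reindex e e B) := by
  obtain ⟨P, hP, rfl⟩ := h
  refine ⟨Matrix.reindex e e P, by rwa [det_reindex_self], ?_⟩
  simp only [reindex_apply, transpose_submatrix, submatrix_mul_equiv]

end Matrix

def gramUU : Matrix (Fin 4) (Fin 4) ℤ := !![0, 1, 0, 0; 1, 0, 0, 0; 0, 0, 0, 1; 0, 0, 1, 0]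

theorem two_smul_gramHalf : (2 : ℚ) • gramHalf = gramG.map (Int.cast : ℤ → ℚ) := by
  ext i j
  fin_cases i <;> fin_cases j <;> norm_num [gramHalf, gramG]

/-- The columns are the basis `-e₁ - e₃, e₃` of an `A₂(-1)` and `e₂ - e₁` spanning its
orthogonal complement. -/
theorem gramG_isCongruent : IsCongruent gramG !![-2, 1, 0; 1, -2, 0; 0, 0, -2] := by
  refine ⟨!![-1, 0, -1; 0, 0, 1; -1, 1, 0], ?_, ?_⟩
  · simp [det_fin_three]
  · decide

theorem gramUUG_eq_reindex_fromBlocks :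
    gramUUG = reindex finSumFinEquiv finSumFinEquiv (fromBlocks gramUU 0 0 gramG) := by
  decide

theorem gramUUA2A1_eq_reindex_fromBlocks :
    gramUUA2A1 = reindex finSumFinEquiv finSumFinEquiv
      (fromBlocks gramUU 0 0 !![-2, 1, 0; 1, -2, 0; 0, 0, -2]) := by
  decide

/-- Scaling `[[-1,-1,1/2],[-1,-2,1/2],[1/2,1/2,-1]]` by `2` gives the integral matrix
`[[-2,-2,1],[-2,-4,1],[1,1,-2]]`, which is isometric over `ℤ` to `A2(-1) ⊕ A1(-1)`;
consequently `U ⊕ U ⊕ [[-2,-2,1],[-2,-4,1],[1,1,-2]]` is isometric to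
`U ⊕ U ⊕ A2(-1) ⊕ A1(-1)`. -/
theorem stmt_5 :
    (2 : ℚ) • gramHalf = gramG.map (Int.cast : ℤ → ℚ) ∧
    (∃ P : Matrix (Fin 3) (Fin 3) ℤ, IsUnit P.det ∧
      Pᵀ * gramG * P = !![-2, 1, 0; 1, -2, 0; 0, 0, -2]) ∧
    (∃ Q : Matrix (Fin 7) (Fin 7) ℤ, IsUnit Q.det ∧
      Qᵀ * gramUUG * Q = gramUUA2A1) := by
  refine ⟨two_smul_gramHalf, gramG_isCongruent, ?_⟩
  rw [gramUUG_eq_reindex_fromBlocks, gramUUA2A1_eq_reindex_fromBlocks]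
  exact (gramG_isCongruent.fromBlocks_right gramUU).reindex finSumFinEquiv
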